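/- arXiv:1101.1050 — 2 statements merged into one kernel-verified Lean document; each statement's English description precedes it below -/
import Mathlib

section
/- Let p be an odd prime and let k, r be integers in {0, 1, ..., p-1} with k + r >= p. Then p^2 divides C(2k,k) * C(3k,k) * C(2r,r) * C(3r,r). -/
open Nat Finset in
lemma carry_dvd_choose {p n k : ℕ} (hp : p.Prime) (hkn : k ≤ n)
    (h : p ≤ k % p + (n - k) % p) : p ∣ Nat.choose n k := by
  have hpn : p ≤ n := h.trans (by
    calc k % p + (n - k) % p ≤ k + (n - k) := Nat.add_le_add (Nat.mod_le _ _) (Nat.mod_le _ _)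
    _ = n := Nat.add_sub_cancel' hkn)
  have hb : Nat.log p n < Nat.log p n + 1 := Nat.lt_succ_self _
  have hmul := Nat.Prime.emultiplicity_choose hp hkn hb
  have h1 : (1 : ℕ) ∈ {i ∈ Ico 1 (Nat.log p n + 1) | p ^ i ≤ k % p ^ i + (n - k) % p ^ i} := by
    simp only [mem_filter, mem_Ico, pow_one]
    exact ⟨⟨le_refl 1, Nat.lt_succ_of_le (Nat.le_log_of_pow_le hp.one_lt (by simpa using hpn))⟩, h⟩
  have hcard : 1 ≤ #{i ∈ Ico 1 (Nat.log p n + 1) | p ^ i ≤ k % p ^ i + (n - k) % p ^ i} :=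
    Finset.card_pos.mpr ⟨1, h1⟩
  have : (1 : ℕ∞) ≤ emultiplicity p (Nat.choose n k) := by
    rw [hmul]; exact_mod_cast hcard
  simpa using pow_dvd_of_le_emultiplicity this

lemma dvd_c2 {p m : ℕ} (hp : p.Prime) (hm : m < p) (h : p ≤ 2 * m) :
    p ∣ Nat.choose (2 * m) m := by
  apply carry_dvd_choose hp (by omega)
  have h1 : m % p = m := Nat.mod_eq_of_lt hm
  have h2 : (2 * m - m) % p = m := by rw [show 2 * m - m = m by omega, h1]
  omega

lemma dvd_c3 {p m : ℕ} (hp : p.Prime) (hm : 2 * m < p) (h : p ≤ 3 * m) :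
    p ∣ Nat.choose (3 * m) m := by
  apply carry_dvd_choose hp (by omega)
  have h1 : m % p = m := Nat.mod_eq_of_lt (by omega)
  have h2 : (3 * m - m) % p = 2 * m := by
    rw [show 3 * m - m = 2 * m by omega]; exact Nat.mod_eq_of_lt hm
  omega

lemma dvd_c3' {p m : ℕ} (hp : p.Prime) (hm : m < p) (h : 2 * p < 3 * m) :
    p ∣ Nat.choose (3 * m) m := by
  apply carry_dvd_choose hp (by omega)
  have h1 : m % p = m := Nat.mod_eq_of_lt hm
  have h2 : (3 * m - m) % p = 2 * m - p := by
    rw [show 3 * m - m = 2 * m by omega, Nat.mod_eq_sub_mod (by omega)]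
    exact Nat.mod_eq_of_lt (by omega)
  omega

theorem stmt_12 (p : ℕ) (hp : p.Prime) (hodd : Odd p) (k r : ℕ)
    (hk : k ≤ p - 1) (hr : r ≤ p - 1) (hkr : p ≤ k + r) :
    p ^ 2 ∣ Nat.choose (2 * k) k * Nat.choose (3 * k) k *
      (Nat.choose (2 * r) r * Nat.choose (3 * r) r) := by
  have hp2 := hp.two_le
  have hk' : k < p := by omega
  have hr' : r < p := by omega
  rw [pow_two]
  by_cases h2k : p ≤ 2 * k
  · have hA := dvd_c2 hp hk' h2k
    by_cases h2r : p ≤ 2 * r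
    · exact mul_dvd_mul (Dvd.dvd.mul_right hA _) (Dvd.dvd.mul_right (dvd_c2 hp hr' h2r) _)
    · by_cases h3r : p ≤ 3 * r
      · exact mul_dvd_mul (Dvd.dvd.mul_right hA _)
          (Dvd.dvd.mul_left (dvd_c3 hp (by omega) h3r) _)
      · have hB := dvd_c3' hp hk' (by omega)
        exact Dvd.dvd.mul_right (mul_dvd_mul hA hB) _
  · have h2r : p ≤ 2 * r := by omega
    have hC := dvd_c2 hp hr' h2r
    by_cases h3k : p ≤ 3 * k
    · exact mul_dvd_mul (Dvd.dvd.mul_left (dvd_c3 hp (by omega) h3k) _)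
        (Dvd.dvd.mul_right hC _)
    · have hD := dvd_c3' hp hr' (by omega)
      exact Dvd.dvd.mul_left (mul_dvd_mul hC hD) _
end

section
/- Let p be an odd prime and let k, r be integers in {0, 1, ..., p-1} with k + r >= p. Then p^2 divides C(2k,k) * C(4k,2k) * C(2r,r) * C(4r,2r). -/
lemma aux_dvd_choose_of_mod_lt {p n k : ℕ} (hp : p.Prime) (h : n % p < k % p) :
    p ∣ n.choose k := by
  haveI : Fact p.Prime := ⟨hp⟩
  have hc := Choose.choose_modEq_choose_mod_mul_choose_div_nat (n := n) (k := k) (p := p)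
  rw [Nat.choose_eq_zero_of_lt h, zero_mul] at hc
  exact (Nat.modEq_zero_iff_dvd).mp hc

lemma aux_A {p a : ℕ} (hp : p.Prime) (ha : a < p) (h4 : p ≤ 4 * a) :
    p ∣ Nat.choose (2 * a) a * Nat.choose (4 * a) (2 * a) := by
  by_cases h2 : p ≤ 2 * a
  · exact Dvd.dvd.mul_right (hp.dvd_choose ha (by omega) h2) _
  · exact Dvd.dvd.mul_left (hp.dvd_choose (by omega) (by omega) h4) _

lemma aux_B {p a : ℕ} (hp : p.Prime) (ha : a < p) (h4 : 3 * p < 4 * a) :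
    p ^ 2 ∣ Nat.choose (2 * a) a * Nat.choose (4 * a) (2 * a) := by
  have h1 : p ∣ Nat.choose (2 * a) a := hp.dvd_choose ha (by omega) (by omega)
  have h2 : p ∣ Nat.choose (4 * a) (2 * a) := by
    apply aux_dvd_choose_of_mod_lt hp
    have e1 : 2 * a % p = 2 * a - p := by
      conv_lhs => rw [show 2 * a = (2 * a - p) + 1 * p by omega, Nat.add_mul_mod_self_right]
      exact Nat.mod_eq_of_lt (show 2 * a - p < p by omega)
    have e2 : 4 * a % p = 4 * a - 3 * p := by
      conv_lhs => rw [show 4 * a = (4 * a - 3 * p) + 3 * p by omega, Nat.add_mul_mod_self_right]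
      exact Nat.mod_eq_of_lt (show 4 * a - 3 * p < p by omega)
    omega
  rw [pow_two]
  exact mul_dvd_mul h1 h2

theorem stmt_13 (p : ℕ) (hp : p.Prime) (hodd : Odd p) (k r : ℕ)
    (hk : k ≤ p - 1) (hr : r ≤ p - 1) (hkr : p ≤ k + r) :
    p ^ 2 ∣ Nat.choose (2 * k) k * Nat.choose (4 * k) (2 * k) *
      (Nat.choose (2 * r) r * Nat.choose (4 * r) (2 * r)) := by
  have hp2 := hp.two_le
  have hk' : k < p := by omega
  have hr' : r < p := by omega
  by_cases h1 : p ≤ 4 * k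
  · by_cases h2 : p ≤ 4 * r
    · rw [pow_two]
      exact mul_dvd_mul (aux_A hp hk' h1) (aux_A hp hr' h2)
    · exact Dvd.dvd.mul_right (aux_B hp hk' (by omega)) _
  · exact Dvd.dvd.mul_left (aux_B hp hr' (by omega)) _
end
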